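/- Let τ(ω) = cos²(ω₁/2) e^{-iω₁} cos²(ω₂/2) e^{-iω₂} cos((ω₁+ω₂)/2) e^{-i(ω₁+ω₂)/2} (the lowpass mask of the bivariate box spline with direction matrix [I I e], up to phase), and S(ω)^{-1} = (1/54)(2+cos ω₁)(2+cos ω₂)(5+cos(ω₁+ω₂)). Then for all ω ∈ ℝ², 1/S(2ω) − Σ_{γ∈{0,π}²} |τ(ω+γ)|²/S(ω+γ) ≥ 0, i.e., the oblique sub-QMF condition holds for dyadic dilation. -/

import Mathlib

/-!
Put `a = cos ω₁`, `b = cos ω₂`, `p = cos (ω₁ + ω₂)`. Since `cos² (u / 2) = (1 + cos u) / 2`,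
both `|τ|²` and `1 / S` are polynomials in `(a, b, p)`; the four shifts by `γ ∈ {0, π}²` change
these to `(±a, ±b, ±p)` with the sign of `p` the product of the other two, and `1 / S (2ω)` is the
same polynomial at `(2a² - 1, 2b² - 1, 2p² - 1)`. The defect is then, identically in independent
`a, b, p`, the sum over the four sign patterns of
`((1 ± a) / 2)² (2 ± a) / 3 · ((1 ± b) / 2)² (2 ± b) / 3 · ((1 ∓ p) / 2)²`,
i.e. of `cos⁴ (2 + cos) / 3 · cos⁴ (2 + cos) / 3 · sin⁴`, which is nonnegative because `|a|, |b| ≤ 1`.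
-/

open Real

noncomputable section

def boxMask (x y : ℝ) : ℂ :=
  ((cos (x / 2) : ℝ) : ℂ) ^ 2 * Complex.exp (-Complex.I * (x : ℂ))
    * ((cos (y / 2) : ℝ) : ℂ) ^ 2 * Complex.exp (-Complex.I * (y : ℂ))
    * ((cos ((x + y) / 2) : ℝ) : ℂ)
    * Complex.exp (-Complex.I * (((x + y) / 2 : ℝ) : ℂ))

def maskSqOfCos (a b p : ℝ) : ℝ := ((1 + a) / 2) ^ 2 * ((1 + b) / 2) ^ 2 * ((1 + p) / 2)

def invSOfCos (a b p : ℝ) : ℝ := (1 / 54) * (2 + a) * (2 + b) * (5 + p)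

def obliqueWeightOfCos (a b p : ℝ) : ℝ := maskSqOfCos a b p * invSOfCos a b p

end

lemma cos_half_sq (x : ℝ) : cos (x / 2) ^ 2 = (1 + cos x) / 2 := by
  rw [cos_sq, mul_div_cancel₀ x two_ne_zero]; ring

lemma norm_cexp_neg_I_mul_ofReal (u : ℝ) : ‖Complex.exp (-Complex.I * u)‖ = 1 := by
  rw [neg_mul, mul_comm, ← neg_mul, ← Complex.ofReal_neg, Complex.norm_exp_ofReal_mul_I]

lemma norm_boxMask_sq (x y : ℝ) :
    ‖boxMask x y‖ ^ 2 = maskSqOfCos (cos x) (cos y) (cos (x + y)) := by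
  simp only [boxMask, maskSqOfCos, norm_mul, norm_pow, norm_cexp_neg_I_mul_ofReal,
    Complex.norm_real, norm_eq_abs, mul_one, mul_pow, sq_abs, ← pow_mul, ← cos_half_sq]

lemma sum_pair_pair {M : Type*} [AddCommMonoid M] {s t : ℝ} (hst : s ≠ t) (F : ℝ → ℝ → M) :
    ∑ γ₁ ∈ ({s, t} : Finset ℝ), ∑ γ₂ ∈ ({s, t} : Finset ℝ), F γ₁ γ₂
      = F s s + F s t + F t s + F t t := by
  simp only [Finset.sum_pair hst, add_assoc]

lemma sum_half_period_shifts (F : ℝ → ℝ → ℝ → ℝ) (x y : ℝ) :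
    ∑ γ₁ ∈ ({0, π} : Finset ℝ), ∑ γ₂ ∈ ({0, π} : Finset ℝ),
        F (cos (x + γ₁)) (cos (y + γ₂)) (cos (x + γ₁ + (y + γ₂)))
      = F (cos x) (cos y) (cos (x + y)) + F (cos x) (-cos y) (-cos (x + y))
        + F (-cos x) (cos y) (-cos (x + y)) + F (-cos x) (-cos y) (cos (x + y)) := by
  have h01 : x + (y + π) = x + y + π := by ring
  have h10 : x + π + y = x + y + π := by ring
  have h11 : x + π + (y + π) = x + y + π + π := by ring
  rw [sum_pair_pair pi_ne_zero.symm]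
  simp only [add_zero, h01, h10, h11, cos_add_pi, neg_neg]

lemma invSOfCos_cos_two_mul (x y : ℝ) :
    invSOfCos (cos (2 * x)) (cos (2 * y)) (cos (2 * x + 2 * y))
      = invSOfCos (2 * cos x ^ 2 - 1) (2 * cos y ^ 2 - 1) (2 * cos (x + y) ^ 2 - 1) := by
  rw [← mul_add, cos_two_mul, cos_two_mul, cos_two_mul]

lemma oblique_defect_eq (a b p : ℝ) :
    invSOfCos (2 * a ^ 2 - 1) (2 * b ^ 2 - 1) (2 * p ^ 2 - 1)
        - (obliqueWeightOfCos a b p + obliqueWeightOfCos a (-b) (-p)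
          + obliqueWeightOfCos (-a) b (-p) + obliqueWeightOfCos (-a) (-b) p)
      = ((1 + a) / 2) ^ 2 * ((2 + a) / 3) * ((1 + b) / 2) ^ 2 * ((2 + b) / 3) * ((1 - p) / 2) ^ 2
        + ((1 + a) / 2) ^ 2 * ((2 + a) / 3) * ((1 - b) / 2) ^ 2 * ((2 - b) / 3) * ((1 + p) / 2) ^ 2
        + ((1 - a) / 2) ^ 2 * ((2 - a) / 3) * ((1 + b) / 2) ^ 2 * ((2 + b) / 3) * ((1 + p) / 2) ^ 2
        + ((1 - a) / 2) ^ 2 * ((2 - a) / 3) * ((1 - b) / 2) ^ 2 * ((2 - b) / 3) * ((1 - p) / 2) ^ 2 := by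
  simp only [obliqueWeightOfCos, maskSqOfCos, invSOfCos]
  ring

lemma oblique_defect_nonneg {a b : ℝ} (ha : |a| ≤ 2) (hb : |b| ≤ 2) (p : ℝ) :
    0 ≤ invSOfCos (2 * a ^ 2 - 1) (2 * b ^ 2 - 1) (2 * p ^ 2 - 1)
        - (obliqueWeightOfCos a b p + obliqueWeightOfCos a (-b) (-p)
          + obliqueWeightOfCos (-a) b (-p) + obliqueWeightOfCos (-a) (-b) p) := by
  obtain ⟨ha₁, ha₂⟩ := abs_le.mp ha
  obtain ⟨hb₁, hb₂⟩ := abs_le.mp hb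
  have h2a : 0 ≤ (2 + a) / 3 := by linarith
  have h2a' : 0 ≤ (2 - a) / 3 := by linarith
  have h2b : 0 ≤ (2 + b) / 3 := by linarith
  have h2b' : 0 ≤ (2 - b) / 3 := by linarith
  rw [oblique_defect_eq]
  apply_rules [sq_nonneg, add_nonneg, mul_nonneg, h2a, h2a', h2b, h2b']

/-- The oblique sub-QMF condition holds for dyadic dilation in two dimensions for
the lowpass mask `τ` of the box spline with direction matrix `[I I e]` and the
vanishing moment recovery function `S` with
`1/S(ω) = (1/54)(2+cos ω₁)(2+cos ω₂)(5+cos(ω₁+ω₂))`. -/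
theorem boxspline_oblique_subQMF
    (τ : ℝ → ℝ → ℂ)
    (hτ : ∀ x y : ℝ, τ x y
      = ((Real.cos (x / 2) : ℝ) : ℂ) ^ 2 * Complex.exp (-Complex.I * (x : ℂ))
        * ((Real.cos (y / 2) : ℝ) : ℂ) ^ 2 * Complex.exp (-Complex.I * (y : ℂ))
        * ((Real.cos ((x + y) / 2) : ℝ) : ℂ)
        * Complex.exp (-Complex.I * (((x + y) / 2 : ℝ) : ℂ)))
    (invS : ℝ → ℝ → ℝ)
    (hinvS : ∀ x y : ℝ, invS x y
      = (1 / 54) * (2 + Real.cos x) * (2 + Real.cos y) * (5 + Real.cos (x + y))) :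
    ∀ ω₁ ω₂ : ℝ,
      0 ≤ invS (2 * ω₁) (2 * ω₂)
          - ∑ γ₁ ∈ ({0, Real.pi} : Finset ℝ), ∑ γ₂ ∈ ({0, Real.pi} : Finset ℝ),
              ‖τ (ω₁ + γ₁) (ω₂ + γ₂)‖ ^ 2 * invS (ω₁ + γ₁) (ω₂ + γ₂) := by
  obtain rfl : τ = boxMask := funext₂ hτ
  obtain rfl : invS = fun x y ↦ invSOfCos (cos x) (cos y) (cos (x + y)) := funext₂ hinvS
  intro x y
  have hweight (u v : ℝ) : ‖boxMask u v‖ ^ 2 * invSOfCos (cos u) (cos v) (cos (u + v))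
      = obliqueWeightOfCos (cos u) (cos v) (cos (u + v)) := by
    rw [norm_boxMask_sq, obliqueWeightOfCos]
  simp only [hweight, sum_half_period_shifts obliqueWeightOfCos, invSOfCos_cos_two_mul]
  exact oblique_defect_nonneg ((abs_cos_le_one x).trans one_le_two)
    ((abs_cos_le_one y).trans one_le_two) _
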